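/- Let (Ξ_l)_{l≥0} be a sequence of independent real-valued random variables with E[Ξ_l] = π^l(φ) − π^{l−1}(φ) for l ≥ 1 and E[Ξ_0] = π^0(φ), where π^l(φ) → π(φ) as l → ∞ and sup_l E[Ξ_l²] < ∞ level-wise. Let P_L be a probability mass function on ℕ with P_L(l) > 0 for all l. If Σ_{l≥0} E[Ξ_l²]/P_L(l) < ∞, then the single-term estimator Ξ_L/P_L(L), where L ~ P_L is independent of (Ξ_l), is an unbiased estimator of π(φ) with finite variance. -/

import Mathlib

open MeasureTheory ProbabilityTheory Filter

/-! On the event `{L = l}` the estimator equals `Ξ l / P l`, and since `L` is independent of the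
sequence `Ξ`, integrating any function of it over that event gives `P l` times its expectation.
Summing over `l`, the second moment of the estimator is `∑ E[Ξ l ^ 2] / P l < ∞`, and its mean is
`∑ E[Ξ l]`, a telescoping series whose partial sums are `π^n(φ) → π(φ)`. -/

section Telescoping

variable {G : Type*} [AddCommGroup G] [TopologicalSpace G] [T2Space G]

theorem HasSum.eq_of_telescoping {d a : ℕ → G} {s t : G} (hd : HasSum d s) (h0 : d 0 = a 0)
    (hsucc : ∀ l, 1 ≤ l → d l = a l - a (l - 1)) (ha : Tendsto a atTop (nhds t)) : s = t := by
  have hpartial : ∀ n, ∑ l ∈ Finset.range (n + 1), d l = a n := fun n => by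
    rw [Finset.eq_sum_range_sub' a n]
    refine Finset.sum_congr rfl fun l _ => ?_
    split_ifs with hl
    · rw [hl, h0]
    · exact hsucc l (Nat.one_le_iff_ne_zero.2 hl)
  refine tendsto_nhds_unique ?_ ha
  simpa only [hpartial] using (tendsto_add_atTop_iff_nat 1).2 hd.tendsto_sum_nat

end Telescoping

section Fibres

variable {Ω ι E : Type*} [MeasurableSpace Ω] {μ : Measure Ω} [Countable ι] {L : Ω → ι}
  [NormedAddCommGroup E]

theorem hasSum_setIntegral_fiber [NormedSpace ℝ E] [MeasurableSpace ι]
    [MeasurableSingletonClass ι] (hL : Measurable L) {f : Ω → E}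
    (hf : Integrable f μ) : HasSum (fun l => ∫ ω in L ⁻¹' {l}, f ω ∂μ) (∫ ω, f ω ∂μ) := by
  have h := hasSum_integral_iUnion (fun l => hL (measurableSet_singleton l))
    (pairwise_disjoint_fiber L) (hf.integrableOn (s := ⋃ l, L ⁻¹' {l}))
  rwa [← Set.preimage_iUnion, Set.iUnion_of_singleton, Set.preimage_univ,
    Measure.restrict_univ] at h

theorem integrable_of_summable_setIntegral_norm_fiber {f : Ω → E}
    (hi : ∀ l, IntegrableOn f (L ⁻¹' {l}) μ)
    (h : Summable fun l => ∫ ω in L ⁻¹' {l}, ‖f ω‖ ∂μ) : Integrable f μ := by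
  have h := integrableOn_iUnion_of_summable_integral_norm hi h
  rwa [← Set.preimage_iUnion, Set.iUnion_of_singleton, Set.preimage_univ, integrableOn_univ] at h

end Fibres

theorem ProbabilityTheory.IndepFun.setIntegral_preimage_eq_mul {Ω β 𝓧 : Type*}
    [MeasurableSpace Ω] {μ : Measure Ω} [MeasurableSpace β] [MeasurableSpace 𝓧]
    {L : Ω → β} {X : Ω → 𝓧} (hLX : IndepFun L X μ) (hL : Measurable L) (hX : AEMeasurable X μ)
    {f : 𝓧 → ℝ} (hf : AEStronglyMeasurable f (μ.map X)) {B : Set β} (hB : MeasurableSet B) :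
    ∫ ω in L ⁻¹' B, f (X ω) ∂μ = μ.real (L ⁻¹' B) * ∫ ω, f (X ω) ∂μ :=
  ((IndepFun_iff_Indep L X μ).1 hLX).setIntegral_eq_mul hL.comap_le hX ⟨B, hB, rfl⟩ hf

section SingleTerm

variable {Ω : Type*} {Ξ : ℕ → Ω → ℝ} {P : ℕ → ℝ} {L : Ω → ℕ}

noncomputable def singleTermEstimator (Ξ : ℕ → Ω → ℝ) (P : ℕ → ℝ) (L : Ω → ℕ) (ω : Ω) : ℝ :=
  Ξ (L ω) ω / P (L ω)

theorem singleTermEstimator_of_mem_fiber {l : ℕ} {ω : Ω} (hω : ω ∈ L ⁻¹' {l}) :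
    singleTermEstimator Ξ P L ω = Ξ l ω / P l := by
  rw [Set.mem_preimage, Set.mem_singleton_iff] at hω
  rw [singleTermEstimator, hω]

variable [MeasurableSpace Ω] {μ : Measure Ω}

theorem measurable_singleTermEstimator (hΞ : ∀ l, Measurable (Ξ l)) (hL : Measurable L) :
    Measurable (singleTermEstimator Ξ P L) := by
  have hΞL : Measurable fun ω => Ξ (L ω) ω :=
    (measurable_from_prod_countable_left (f := fun p : Ω × ℕ => Ξ p.2 p.1) hΞ).comp
      (measurable_id.prodMk hL)
  exact hΞL.div ((measurable_of_countable P).comp hL)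

theorem setIntegral_fiber_comp_singleTermEstimator
    (hΞ : ∀ l, Measurable (Ξ l)) (hL : Measurable L)
    (hLΞ : IndepFun L (fun ω l => Ξ l ω) μ) (hLlaw : ∀ l, μ {ω | L ω = l} = ENNReal.ofReal (P l))
    (hP : ∀ l, 0 < P l) {g : ℝ → ℝ} (hg : Measurable g) (l : ℕ) :
    ∫ ω in L ⁻¹' {l}, g (singleTermEstimator Ξ P L ω) ∂μ = P l * ∫ ω, g (Ξ l ω / P l) ∂μ := by
  have hfibre : μ.real (L ⁻¹' {l}) = P l := by
    rw [measureReal_def, ← ENNReal.toReal_ofReal (hP l).le, ← hLlaw]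
    rfl
  rw [setIntegral_congr_fun (hL (measurableSet_singleton l))
      fun ω hω => congrArg g (singleTermEstimator_of_mem_fiber hω),
    hLΞ.setIntegral_preimage_eq_mul hL (measurable_pi_lambda _ hΞ).aemeasurable
      (f := fun x : ℕ → ℝ => g (x l / P l))
      (hg.comp ((measurable_pi_apply l).div_const _)).aestronglyMeasurable
      (measurableSet_singleton l), hfibre]

theorem integrable_sq_singleTermEstimator (hΞ : ∀ l, Measurable (Ξ l)) (hL : Measurable L)
    (hLΞ : IndepFun L (fun ω l => Ξ l ω) μ) (hLlaw : ∀ l, μ {ω | L ω = l} = ENNReal.ofReal (P l))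
    (hP : ∀ l, 0 < P l) (hΞ2 : ∀ l, MemLp (Ξ l) 2 μ)
    (hfin : Summable fun l => (∫ ω, Ξ l ω ^ 2 ∂μ) / P l) :
    Integrable (fun ω => singleTermEstimator Ξ P L ω ^ 2) μ := by
  have hsq_int (l : ℕ) : Integrable (fun ω => (Ξ l ω / P l) ^ 2) μ := by
    simpa only [div_pow] using (hΞ2 l).integrable_sq.div_const (P l ^ 2)
  have hsecond (l : ℕ) :
      ∫ ω in L ⁻¹' {l}, singleTermEstimator Ξ P L ω ^ 2 ∂μ = (∫ ω, Ξ l ω ^ 2 ∂μ) / P l := by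
    rw [setIntegral_fiber_comp_singleTermEstimator hΞ hL hLΞ hLlaw hP (g := fun x => x ^ 2)
      (measurable_id.pow_const 2)]
    simp only [div_pow, integral_div]
    field_simp [(hP l).ne']
  refine integrable_of_summable_setIntegral_norm_fiber (L := L) (fun l => ?_) ?_
  · exact (hsq_int l).integrableOn.congr_fun
      (fun ω hω => by rw [singleTermEstimator_of_mem_fiber hω]) (hL (measurableSet_singleton l))
  · simpa only [norm_pow, Real.norm_eq_abs, sq_abs, hsecond] using hfin

theorem hasSum_integral_singleTermEstimator (hΞ : ∀ l, Measurable (Ξ l)) (hL : Measurable L)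
    (hLΞ : IndepFun L (fun ω l => Ξ l ω) μ) (hLlaw : ∀ l, μ {ω | L ω = l} = ENNReal.ofReal (P l))
    (hP : ∀ l, 0 < P l) (hint : Integrable (singleTermEstimator Ξ P L) μ) :
    HasSum (fun l => ∫ ω, Ξ l ω ∂μ) (∫ ω, singleTermEstimator Ξ P L ω ∂μ) := by
  have hfibre (l : ℕ) : ∫ ω in L ⁻¹' {l}, singleTermEstimator Ξ P L ω ∂μ = ∫ ω, Ξ l ω ∂μ := by
    rw [setIntegral_fiber_comp_singleTermEstimator hΞ hL hLΞ hLlaw hP (g := fun x => x)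
      measurable_id, integral_div, mul_div_cancel₀ _ (hP l).ne']
  simpa only [hfibre] using hasSum_setIntegral_fiber hL hint

end SingleTerm

theorem stmt_0_general
    {Ω : Type*} [MeasurableSpace Ω] (μ : Measure Ω) [IsProbabilityMeasure μ]
    (Ξ : ℕ → Ω → ℝ) (hmeas : ∀ l, Measurable (Ξ l))
    (πl : ℕ → ℝ) (πφ : ℝ)
    (hE0 : ∫ ω, Ξ 0 ω ∂μ = πl 0)
    (hEl : ∀ l : ℕ, 1 ≤ l → ∫ ω, Ξ l ω ∂μ = πl l - πl (l - 1))
    (hlim : Tendsto πl atTop (nhds πφ))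
    (hL2 : ∀ l, MemLp (Ξ l) 2 μ)
    (P : ℕ → ℝ) (hPpos : ∀ l, 0 < P l)
    (L : Ω → ℕ) (hLmeas : Measurable L)
    (hLlaw : ∀ l, μ {ω | L ω = l} = ENNReal.ofReal (P l))
    (hLindep : IndepFun L (fun ω => fun l => Ξ l ω) μ)
    (hfin : Summable (fun l => (∫ ω, (Ξ l ω) ^ 2 ∂μ) / P l)) :
    (∫ ω, Ξ (L ω) ω / P (L ω) ∂μ = πφ) ∧
      Integrable (fun ω => (Ξ (L ω) ω / P (L ω)) ^ 2) μ := by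
  have hsq : Integrable (fun ω => singleTermEstimator Ξ P L ω ^ 2) μ :=
    integrable_sq_singleTermEstimator hmeas hLmeas hLindep hLlaw hPpos hL2 hfin
  have hint : Integrable (singleTermEstimator Ξ P L) μ :=
    ((memLp_two_iff_integrable_sq
      (measurable_singleTermEstimator hmeas hLmeas).aestronglyMeasurable).2 hsq).integrable
      one_le_two
  have hmean : HasSum (fun l => ∫ ω, Ξ l ω ∂μ) (∫ ω, singleTermEstimator Ξ P L ω ∂μ) :=
    hasSum_integral_singleTermEstimator hmeas hLmeas hLindep hLlaw hPpos hint
  exact ⟨hmean.eq_of_telescoping hE0 hEl hlim, hsq⟩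

/-- Rhee–Glynn single-term debiasing: if `Ξ l` are independent with telescoping means
`E[Ξ 0] = π 0`, `E[Ξ l] = π l - π (l-1)`, `π l → πφ`, `L ~ P` is independent of the
sequence, and `∑ E[Ξ l ^ 2] / P l < ∞`, then `Ξ_L / P(L)` is an unbiased estimator of
`πφ` with finite variance (i.e. finite second moment). -/
theorem stmt_0
    {Ω : Type*} [MeasurableSpace Ω] (μ : Measure Ω) [IsProbabilityMeasure μ]
    (Ξ : ℕ → Ω → ℝ) (hmeas : ∀ l, Measurable (Ξ l))
    (hindep : iIndepFun Ξ μ)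
    (πl : ℕ → ℝ) (πφ : ℝ)
    (hE0 : ∫ ω, Ξ 0 ω ∂μ = πl 0)
    (hEl : ∀ l : ℕ, 1 ≤ l → ∫ ω, Ξ l ω ∂μ = πl l - πl (l - 1))
    (hlim : Tendsto πl atTop (nhds πφ))
    (hL2 : ∀ l, MemLp (Ξ l) 2 μ)
    (P : ℕ → ℝ) (hPpos : ∀ l, 0 < P l) (hPsum : ∑' l, P l = 1)
    (L : Ω → ℕ) (hLmeas : Measurable L)
    (hLlaw : ∀ l, μ {ω | L ω = l} = ENNReal.ofReal (P l))
    (hLindep : IndepFun L (fun ω => fun l => Ξ l ω) μ)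
    (hfin : Summable (fun l => (∫ ω, (Ξ l ω) ^ 2 ∂μ) / P l)) :
    (∫ ω, Ξ (L ω) ω / P (L ω) ∂μ = πφ) ∧
      Integrable (fun ω => (Ξ (L ω) ω / P (L ω)) ^ 2) μ :=
  stmt_0_general μ Ξ hmeas πl πφ hE0 hEl hlim hL2 P hPpos L hLmeas hLlaw hLindep hfin
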